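/- Let T(z) be the exponential generating function of rooted labeled trees, satisfying T = e^{zT}. Then z·T² is pseudo-involutory, i.e., the compositional inverse of z·T(z)² equals -(-z)·T(-z)², and T(-z·T(z)²) = 1/T(z). -/

import Mathlib

open PowerSeries

/-- Composition `f ∘ g` of formal power series (meaningful when the constant
coefficient of `g` is zero). -/
noncomputable def comp (f g : PowerSeries ℚ) : PowerSeries ℚ :=
  PowerSeries.mk fun n =>
    ∑ i ∈ Finset.range (n + 1), (PowerSeries.coeff i f) * (PowerSeries.coeff n (g ^ i))

/-- A formal power series `f` is pseudo-involutory when its compositional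
inverse is `-f(-z)`. -/
def PseudoInvolutory (f : PowerSeries ℚ) : Prop :=
  comp f (-(comp f (-X))) = X ∧ comp (-(comp f (-X))) f = X

/-!
With `u = zT` the tree equation reads `u·e^{-u} = z`, so `u` is the compositional inverse
of `ψ(z) = z·e^{-z}`, while `zT² = u·e^u = φ ∘ u` for `φ(z) = z·e^z = -ψ(-z)`. Reflecting,
`ū(z) = z·T(-z)` inverts `φ`, and the reflection `-(-z)·T(-z)²` of `zT²` is `ψ ∘ ū`. Since
a one-sided compositional inverse is two-sided, `(φ ∘ u) ∘ (ψ ∘ ū) = φ ∘ ū = z` and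
`(ψ ∘ ū) ∘ (φ ∘ u) = ψ ∘ u = z`. Likewise `-zT² = ψ ∘ (-u)`, so
`T(-zT²) = e^u ∘ (u ∘ ψ) ∘ (-u) = e^{-u} = 1/T`.

The tree equation is treated in the form `T = e^{c·zT}`, so that `T(-z)` is the case `c = -1`.
-/

namespace PowerSeries

variable {R : Type*} [CommRing R]

lemma subst_neg_X {g : R⟦X⟧} (hg : constantCoeff g = 0) : subst g (-X : R⟦X⟧) = -g := by
  rw [← coe_substAlgHom (HasSubst.of_constantCoeff_zero' hg), map_neg, coe_substAlgHom,
    subst_X (HasSubst.of_constantCoeff_zero' hg)]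

lemma subst_subst_cancel {φ u ψ v : R⟦X⟧} (hu : constantCoeff u = 0)
    (hψ : constantCoeff ψ = 0) (hv : constantCoeff v = 0) (h : subst ψ u = X) :
    subst (subst v ψ) (subst u φ) = subst v φ := by
  rw [subst_comp_subst_apply (HasSubst.of_constantCoeff_zero' hu)
    (HasSubst.of_constantCoeff_zero' (constantCoeff_subst_eq_zero hv _ hψ)),
    ← subst_comp_subst_apply (HasSubst.of_constantCoeff_zero' hψ)
      (HasSubst.of_constantCoeff_zero' hv), h, subst_X (HasSubst.of_constantCoeff_zero' hv)]

lemma subst_eq_X_of_subst_eq_X {φ u : R⟦X⟧} (hφ : constantCoeff φ = 0)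
    (hφ₁ : IsUnit (coeff 1 φ)) (hu : constantCoeff u = 0) (h : subst u φ = X) :
    subst φ u = X := by
  have hinv : u = φ.substInvOfIsUnit hφ₁ := by
    calc u = subst u (subst φ (φ.substInvOfIsUnit hφ₁)) := by
          rw [subst_substInvOfIsUnit_left _ hφ, subst_X (HasSubst.of_constantCoeff_zero' hu)]
      _ = _ := by
          rw [subst_comp_subst_apply (HasSubst.of_constantCoeff_zero' hφ)
            (HasSubst.of_constantCoeff_zero' hu), h, X_subst]
  rw [hinv, subst_substInvOfIsUnit_left _ hφ]

lemma subst_neg_eq_subst_rescale {g : R⟦X⟧} (hg : constantCoeff g = 0) (f : R⟦X⟧) :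
    subst (-g) f = subst g (rescale (-1) f) := by
  rw [rescale_eq_subst, subst_comp_subst_apply (HasSubst.smul_X' _)
    (HasSubst.of_constantCoeff_zero' hg), neg_one_smul, subst_neg_X hg]

lemma rescale_subst (r : R) {g : R⟦X⟧} (hg : constantCoeff g = 0) (f : R⟦X⟧) :
    rescale r (subst g f) = subst (rescale r g) f := by
  rw [rescale_eq_subst, rescale_eq_subst, subst_comp_subst_apply
    (HasSubst.of_constantCoeff_zero' hg) (HasSubst.smul_X' _)]

section Exp

variable [Algebra ℚ R]

lemma rescale_exp_mul_rescale_neg_exp (c : R) : rescale c (exp R) * rescale (-c) (exp R) = 1 := by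
  rw [exp_mul_exp_eq_exp_add, add_neg_cancel, rescale_zero_apply, constantCoeff_exp, map_one]

variable {c : R} {T : R⟦X⟧}

lemma mul_subst_rescale_neg_exp (hT : T = subst (X * T) (rescale c (exp R))) :
    T * subst (X * T) (rescale (-c) (exp R)) = 1 := by
  have hu : HasSubst (X * T) := HasSubst.of_constantCoeff_zero' (by simp)
  calc T * _ = subst (X * T) (rescale c (exp R)) * subst (X * T) (rescale (-c) (exp R)) := by
        rw [← hT]
    _ = 1 := by
        rw [← subst_mul hu, rescale_exp_mul_rescale_neg_exp, ← coe_substAlgHom hu, map_one]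

lemma subst_X_mul_rescale_neg_exp (hT : T = subst (X * T) (rescale c (exp R))) :
    subst (X * T) (X * rescale (-c) (exp R)) = X := by
  have hu : HasSubst (X * T) := HasSubst.of_constantCoeff_zero' (by simp)
  rw [subst_mul hu, subst_X hu, mul_assoc, mul_subst_rescale_neg_exp hT, mul_one]

lemma rescale_neg_one_eq_subst (hT : T = subst (X * T) (rescale c (exp R))) :
    rescale (-1) T = subst (X * rescale (-1) T) (rescale (-c) (exp R)) := by
  conv_lhs => rw [hT]
  rw [rescale_subst _ (by simp), map_mul, rescale_neg_one_X, neg_mul,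
    subst_neg_eq_subst_rescale (by simp), rescale_rescale, mul_neg_one]

lemma X_mul_sq_eq_subst (hT : T = subst (X * T) (rescale c (exp R))) :
    X * T ^ 2 = subst (X * T) (X * rescale c (exp R)) := by
  have hu : HasSubst (X * T) := HasSubst.of_constantCoeff_zero' (by simp)
  rw [subst_mul hu, subst_X hu, ← hT]
  ring

lemma subst_X_mul_sq_X_mul_sq {Q : R⟦X⟧} (hT : T = subst (X * T) (rescale c (exp R)))
    (hQ : Q = subst (X * Q) (rescale (-c) (exp R))) :
    subst (X * Q ^ 2) (X * T ^ 2) = X := by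
  rw [X_mul_sq_eq_subst hT, X_mul_sq_eq_subst hQ, subst_subst_cancel (by simp) (by simp) (by simp)
    (subst_eq_X_of_subst_eq_X (by simp) (by simp) (by simp) (subst_X_mul_rescale_neg_exp hT))]
  simpa using subst_X_mul_rescale_neg_exp hQ

lemma subst_neg_X_mul_sq_mul_self (hT : T = subst (X * T) (rescale c (exp R))) :
    subst (-(X * T ^ 2)) T * T = 1 := by
  have hu : constantCoeff (X * T) = 0 := by simp
  have hnu : HasSubst (-(X * T)) := HasSubst.of_constantCoeff_zero' (by simp)
  have hf : -(X * T ^ 2) = subst (-(X * T)) (X * rescale (-c) (exp R)) := by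
    rw [subst_mul hnu, subst_X hnu, subst_neg_eq_subst_rescale hu, rescale_rescale, mul_neg_one,
      neg_neg, ← hT]
    ring
  have hTf : subst (-(X * T ^ 2)) T = subst (X * T) (rescale (-c) (exp R)) := by
    conv_lhs => rw [hf]; arg 2; rw [hT]
    rw [subst_subst_cancel hu (by simp) (by simp)
      (subst_eq_X_of_subst_eq_X (by simp) (by simp) hu (subst_X_mul_rescale_neg_exp hT)),
      subst_neg_eq_subst_rescale hu, rescale_rescale, mul_neg_one]
  rw [hTf, mul_comm, mul_subst_rescale_neg_exp hT]

end Exp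

end PowerSeries

open Finset in
lemma comp_eq_subst {g : ℚ⟦X⟧} (hg : constantCoeff g = 0) (f : ℚ⟦X⟧) :
    comp f g = subst g f := by
  ext n
  rw [comp, coeff_mk, coeff_subst' (HasSubst.of_constantCoeff_zero' hg),
    finsum_eq_sum_of_support_subset _ (s := range (n + 1)) fun d hd => ?_]
  · simp only [smul_eq_mul]
  · by_contra hdn
    simp only [coe_range, Set.mem_Iio, not_lt] at hdn
    exact hd (by simp [X_pow_dvd_iff.1 (pow_dvd_pow_of_dvd (X_dvd_iff.2 hg) d) n hdn])

theorem labeled_trees_pseudo_involution_general (T : PowerSeries ℚ)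
    (hT : T = comp (PowerSeries.exp ℚ) (X * T)) :
    PseudoInvolutory (X * T ^ 2) ∧ comp T (-(X * T ^ 2)) = T⁻¹ := by
  have hT' : T = subst (X * T) (rescale 1 (exp ℚ)) := by
    rwa [rescale_one, RingHom.id_apply, ← comp_eq_subst (by simp)]
  have hQ := rescale_neg_one_eq_subst hT'
  have hreflect : -comp (X * T ^ 2) (-X) = X * rescale (-1) T ^ 2 := by
    rw [comp_eq_subst (by simp), subst_neg_eq_subst_rescale (by simp), X_subst]
    simp only [map_mul, map_pow, rescale_neg_one_X]
    ring
  have hinv := subst_neg_X_mul_sq_mul_self hT'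
  refine ⟨⟨?_, ?_⟩, ?_⟩
  · rw [hreflect, comp_eq_subst (by simp)]
    exact subst_X_mul_sq_X_mul_sq hT' hQ
  · rw [hreflect, comp_eq_subst (by simp)]
    exact subst_X_mul_sq_X_mul_sq hQ (by rwa [neg_neg])
  · rw [comp_eq_subst (by simp), PowerSeries.eq_inv_iff_mul_eq_one]
    · exact hinv
    · exact right_ne_zero_of_mul_eq_one (by simpa using congrArg constantCoeff hinv)

/-- For the exponential generating function of rooted labeled trees,
`T = e^{zT}`, the series `z·T²` is pseudo-involutory (its compositional
inverse is `-(-z)·T(-z)²`), and `T(-z·T(z)²) = 1/T(z)`, i.e. `[T, zT²]` is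
a pseudo-involution. -/
theorem labeled_trees_pseudo_involution (T : PowerSeries ℚ)
    (hT0 : PowerSeries.constantCoeff T = 1)
    (hT : T = comp (PowerSeries.exp ℚ) (X * T)) :
    PseudoInvolutory (X * T ^ 2) ∧ comp T (-(X * T ^ 2)) = T⁻¹ :=
  labeled_trees_pseudo_involution_general T hT
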